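/- Let n m : ℕ with m ≥ 2, let μ be a 3CNF over X = Fin n ⊕ Fin m, and let t : Fin m → Bool be such that every clause of μ contains a literal (Sum.inr j, s) with t j = s. Consider assignments q = (v, v', y, w) with v, v' : Fin n → Bool, y : Fin m → Bool, w : Fin (m − 1) → Bool, indexed by the variable set Fin n ⊕ Fin n ⊕ Fin m ⊕ Fin (m − 1), and define Φ q = true iff: (i) every clause of μ contains a literal that is true under the valuation sending (Sum.inl i, true) to v i, (Sum.inl i, false) to v' i, and (Sum.inr j, s) to decide (y j = s); (ii) (a, w) satisfies the chain condition, where a j = decide (y j ≠ t j); and (iii) for every i : Fin n, w (m − 2) = true → v i = v' i. Let t' be the assignment with v and v' constantly false, y = t, and w constantly true (which satisfies Φ). Then there is a defining set of size at most n for ({q | Φ q = true}, t') if and only if there exists x : Fin n → Bool such that every y : Fin m → Bool making all clauses of μ true under Sum.elim x y equals t. -/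

import Mathlib

/-- A literal over the variable set `X`. -/
abbrev Lit (X : Type*) := X × Bool

/-- A 3-clause over `X`: an ordered triple of literals. -/
abbrev Clause3 (X : Type*) := Lit X × Lit X × Lit X

/-- A literal `(p, s)` is true under `σ` iff `σ p = s`. -/
def litEval {X : Type*} (σ : X → Bool) (l : Lit X) : Bool := σ l.1 == l.2

/-- A clause is true under `σ` iff at least one of its three literals is true. -/
def clauseEval {X : Type*} (σ : X → Bool) (c : Clause3 X) : Bool :=
  litEval σ c.1 || litEval σ c.2.1 || litEval σ c.2.2

/-- `D` is a defining set for `(F, s)`: `s ∈ F` and `s` is the unique element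
of `F` agreeing with `s` at every element of `D`. -/
def IsDefiningSet {V R : Type*} (F : Set (V → R)) (s : V → R) (D : Finset V) : Prop :=
  s ∈ F ∧ ∀ f ∈ F, (∀ x ∈ D, f x = s x) → f = s

/-- The chain condition encoding the clause chain
`(a₁ ∨ a₂ ∨ w₁) ∧ (¬w₁ ∨ a₃ ∨ w₂) ∧ ⋯ ∧ (¬w_{m−2} ∨ a_m ∨ w_{m−1})`. -/
def ChainCond {m : ℕ} (hm : 2 ≤ m) (a : Fin m → Bool) (w : Fin (m - 1) → Bool) : Prop :=
  (a ⟨0, by omega⟩ || a ⟨1, by omega⟩ || w ⟨0, by omega⟩) = true ∧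
  ∀ i : Fin (m - 1), 1 ≤ (i : ℕ) →
    (!(w ⟨(i : ℕ) - 1, by have := i.isLt; omega⟩) ||
      a ⟨(i : ℕ) + 1, by have := i.isLt; omega⟩ || w i) = true

/-- The variable set of the constructed formula `φ(v, v', y, w)`:
the variables `vᵢ`, `v'ᵢ`, `yⱼ`, `wᵢ`. -/
abbrev V4 (n m : ℕ) := Fin n ⊕ (Fin n ⊕ (Fin m ⊕ Fin (m - 1)))

/-- The valuation of literals of `μ` induced by an assignment `q` of the
new variables: `(Sum.inl i, true) ↦ vᵢ`, `(Sum.inl i, false) ↦ v'ᵢ`,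
`(Sum.inr j, s) ↦ decide (yⱼ = s)`. -/
def litVal {n m : ℕ} (q : V4 n m → Bool) : Lit (Fin n ⊕ Fin m) → Bool
  | (Sum.inl i, true) => q (Sum.inl i)
  | (Sum.inl i, false) => q (Sum.inr (Sum.inl i))
  | (Sum.inr j, s) => decide (q (Sum.inr (Sum.inr (Sum.inl j))) = s)

/-- The semantic satisfaction relation `Φ` of the formula `φ(v, v', y, w)`
constructed in the proof of Theorem 2.4. -/
def Phi {n m : ℕ} (hm : 2 ≤ m) (μ : List (Clause3 (Fin n ⊕ Fin m)))
    (t : Fin m → Bool) (q : V4 n m → Bool) : Prop :=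
  (∀ c ∈ μ, (litVal q c.1 || litVal q c.2.1 || litVal q c.2.2) = true) ∧
  ChainCond hm (fun j => decide (q (Sum.inr (Sum.inr (Sum.inl j))) ≠ t j))
    (fun i => q (Sum.inr (Sum.inr (Sum.inr i)))) ∧
  (∀ i : Fin n,
    q (Sum.inr (Sum.inr (Sum.inr ⟨m - 2, by omega⟩))) = true →
      q (Sum.inl i) = q (Sum.inr (Sum.inl i)))

/-- The distinguished assignment `t'`: `v` and `v'` constantly false,
`y = t`, `w` constantly true. -/
def tPrime {n m : ℕ} (t : Fin m → Bool) : V4 n m → Bool :=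
  Sum.elim (fun _ => false)
    (Sum.elim (fun _ => false) (Sum.elim t (fun _ => true)))

/-
For `y = t` the chain clauses force `w ≡ true`, hence `v = v'`; if `y j₀ ≠ t j₀` they are solved by
`wᵢ = [i + 1 < j₀]`, which has `w_{m-2}` false and so leaves `v, v'` free.

A defining set of size `≤ n` must meet every pair `{vᵢ, v'ᵢ}` (else switching both to true gives a
second solution), so it holds exactly one variable of each pair: the one that is false under
`v = x`, `v' = !x` for some `x`. A `y ≠ t` with `μ(x, y)` then extends to a second solution agreeing
with `t'` there. Conversely, a solution agreeing with `t'` there has every true `μ`-literal true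
under `(x, y)`, so `y = t`, `w ≡ true` and `v = v' = false`.
-/

namespace ChainCond

variable {m : ℕ} (hm : 2 ≤ m)

theorem eq_true_of_forall_eq_false {a : Fin m → Bool} {w : Fin (m - 1) → Bool}
    (h : ChainCond hm a w) (ha : ∀ j, a j = false) (i : Fin (m - 1)) : w i = true := by
  obtain ⟨k, hk⟩ := i
  induction k with
  | zero => simpa [ha] using h.1
  | succ k ih => simpa [ha, ih (by omega)] using h.2 ⟨k + 1, hk⟩ (by simp)

theorem of_eq_true (a : Fin m → Bool) {j₀ : Fin m} (hj₀ : a j₀ = true) :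
    ChainCond hm a (fun i => decide ((i : ℕ) + 1 < j₀)) := by
  constructor
  · by_cases h : 1 < (j₀ : ℕ)
    · simp [h]
    · obtain ⟨_ | _ | k, hk⟩ := j₀
      all_goals simp_all
  · intro i hi
    rcases lt_trichotomy ((i : ℕ) + 1) j₀ with h | h | h
    · simp [h]
    · have h' : (⟨i + 1, by omega⟩ : Fin m) = j₀ := Fin.ext h
      simp [h', hj₀]
    · have hw : ¬ ((i : ℕ) - 1 + 1 < j₀) := by omega
      simp [hw]

end ChainCond

section Reduction

variable {n m : ℕ} (hm : 2 ≤ m) {μ : List (Clause3 (Fin n ⊕ Fin m))} {t : Fin m → Bool}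

/-- Of the two variables `vᵢ`, `v'ᵢ`, the one that is false when `v = x` and `v' = !x`. -/
def offVar (x : Fin n → Bool) (i : Fin n) : V4 n m :=
  if x i then Sum.inr (Sum.inl i) else Sum.inl i

def offSet (x : Fin n → Bool) : Finset (V4 n m) :=
  Finset.univ.image (offVar x)

theorem card_offSet_le (x : Fin n → Bool) : (offSet (m := m) x).card ≤ n :=
  Finset.card_image_le.trans_eq (Finset.card_fin n)

theorem offVar_injective (x : Fin n → Bool) : Function.Injective (offVar (m := m) x) := by
  intro i i' h
  unfold offVar at h
  split_ifs at h <;> simpa using h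

theorem eq_offSet_of_card_le {D : Finset (V4 n m)} (hcard : D.card ≤ n)
    (hpair : ∀ i, Sum.inl i ∈ D ∨ Sum.inr (Sum.inl i) ∈ D) :
    D = offSet (fun i => decide (Sum.inl i ∉ D)) := by
  have hsub : offSet (m := m) (fun i => decide (Sum.inl i ∉ D)) ⊆ D := by
    simp only [offSet, offVar, Finset.image_subset_iff, Finset.mem_univ, forall_const]
    intro i
    by_cases h : Sum.inl i ∈ D <;> simp [h, (hpair i).resolve_left]
  refine (Finset.eq_of_subset_of_card_le hsub ?_).symm
  rwa [offSet, Finset.card_image_of_injective _ (offVar_injective _), Finset.card_univ,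
    Fintype.card_fin]

theorem tPrime_offVar (x : Fin n → Bool) (i : Fin n) : tPrime t (offVar (m := m) x i) = false := by
  unfold offVar; split_ifs <;> rfl

theorem forall_offSet_iff (x : Fin n → Bool) (f : V4 n m → Bool) :
    (∀ d ∈ offSet x, f d = tPrime t d) ↔ ∀ i, f (offVar x i) = false := by
  simp [offSet, tPrime_offVar]

theorem litVal_elim_not (x : Fin n → Bool) (y : Fin m → Bool) (w : Fin (m - 1) → Bool)
    (l : Lit (Fin n ⊕ Fin m)) :
    litVal (Sum.elim x (Sum.elim (fun i => !x i) (Sum.elim y w))) l = litEval (Sum.elim x y) l := by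
  rcases l with ⟨i | j, _ | _⟩
  · simp [litVal, litEval]
  · simp [litVal, litEval]
  all_goals by_cases h : y j <;> simp [litVal, litEval, h]

theorem eq_t_of_isDefiningSet_offSet {x : Fin n → Bool}
    (hD : IsDefiningSet {q | Phi hm μ t q} (tPrime t) (offSet x)) (y : Fin m → Bool)
    (hy : ∀ c ∈ μ, clauseEval (Sum.elim x y) c = true) : y = t := by
  by_contra hne
  obtain ⟨j₀, hj₀⟩ := Function.ne_iff.mp hne
  set f : V4 n m → Bool :=
    Sum.elim x (Sum.elim (fun i => !x i) (Sum.elim y fun i => decide ((i : ℕ) + 1 < j₀)))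
  have hf : Phi hm μ t f := by
    refine ⟨fun c hc => ?_, ChainCond.of_eq_true hm _ (j₀ := j₀) (decide_eq_true hj₀),
      fun i hw => absurd (by simpa [f] using hw) (by omega)⟩
    simpa only [f, litVal_elim_not, clauseEval] using hy c hc
  have hagree : ∀ d ∈ offSet x, f d = tPrime t d := by
    rw [forall_offSet_iff]
    intro i
    unfold offVar
    split_ifs with hx <;> simp [f, hx]
  exact hj₀ (congrFun (hD.2 f hf hagree) (Sum.inr (Sum.inr (Sum.inl j₀))))

theorem litEval_of_litVal {x : Fin n → Bool} {f : V4 n m → Bool}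
    (hf : ∀ i, f (offVar x i) = false) {l : Lit (Fin n ⊕ Fin m)} (hl : litVal f l = true) :
    litEval (Sum.elim x fun j => f (Sum.inr (Sum.inr (Sum.inl j)))) l = true := by
  rcases l with ⟨i | j, _ | _⟩
  · cases hxi : x i
    · simp [litEval, hxi]
    · simp [litVal, (by simpa [offVar, hxi] using hf i : f (Sum.inr (Sum.inl i)) = false)] at hl
  · cases hxi : x i
    · simp [litVal, (by simpa [offVar, hxi] using hf i : f (Sum.inl i) = false)] at hl
    · simp [litEval, hxi]
  all_goals simpa [litVal, litEval] using hl

variable (ht : ∀ c ∈ μ, ∃ (j : Fin m) (s : Bool), t j = s ∧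
  (c.1 = (Sum.inr j, s) ∨ c.2.1 = (Sum.inr j, s) ∨ c.2.2 = (Sum.inr j, s)))
include ht

theorem litVal_clauses_of_eq_t {q : V4 n m → Bool}
    (hq : ∀ j, q (Sum.inr (Sum.inr (Sum.inl j))) = t j) :
    ∀ c ∈ μ, (litVal q c.1 || litVal q c.2.1 || litVal q c.2.2) = true := by
  intro c hc
  obtain ⟨j, s, rfl, h | h | h⟩ := ht c hc <;> rw [h] <;> simp [litVal, hq]

theorem phi_tPrime : Phi hm μ t (tPrime t) :=
  ⟨litVal_clauses_of_eq_t ht fun _ => rfl,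
    ⟨by simp [tPrime], fun _ _ => by simp [tPrime]⟩, fun _ _ => rfl⟩

def tPrimePair (t : Fin m → Bool) (i : Fin n) : V4 n m → Bool :=
  Sum.elim (fun i' => decide (i' = i))
    (Sum.elim (fun i' => decide (i' = i)) (Sum.elim t fun _ => true))

theorem phi_tPrimePair (i : Fin n) : Phi hm μ t (tPrimePair t i) :=
  ⟨litVal_clauses_of_eq_t ht fun _ => rfl,
    ⟨by simp [tPrimePair], fun _ _ => by simp [tPrimePair]⟩, fun _ _ => rfl⟩

theorem mem_or_mem_of_isDefiningSet {D : Finset (V4 n m)}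
    (hD : IsDefiningSet {q | Phi hm μ t q} (tPrime t) D) (i : Fin n) :
    Sum.inl i ∈ D ∨ Sum.inr (Sum.inl i) ∈ D := by
  by_contra! h
  have hagree := hD.2 _ (phi_tPrimePair hm ht i) fun d hd => by
    rcases d with i' | i' | _ | _
    · have : i' ≠ i := by rintro rfl; exact h.1 hd
      simp [tPrimePair, tPrime, this]
    · have : i' ≠ i := by rintro rfl; exact h.2 hd
      simp [tPrimePair, tPrime, this]
    all_goals rfl
  simpa [tPrimePair, tPrime] using congrFun hagree (Sum.inl i)

theorem isDefiningSet_offSet {x : Fin n → Bool}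
    (hx : ∀ y : Fin m → Bool, (∀ c ∈ μ, clauseEval (Sum.elim x y) c = true) → y = t) :
    IsDefiningSet {q | Phi hm μ t q} (tPrime t) (offSet x) := by
  refine ⟨phi_tPrime hm ht, fun f ⟨hcl, hch, hvv⟩ hagree => ?_⟩
  rw [forall_offSet_iff] at hagree
  have hy : (fun j => f (Sum.inr (Sum.inr (Sum.inl j)))) = t := by
    refine hx _ fun c hc => ?_
    have h := hcl c hc
    simp only [clauseEval, Bool.or_eq_true] at h ⊢
    rcases h with (h | h) | h <;> simp [litEval_of_litVal hagree h]
  have hw : ∀ i, f (Sum.inr (Sum.inr (Sum.inr i))) = true :=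
    hch.eq_true_of_forall_eq_false hm fun j => by simp [congrFun hy j]
  have hv : ∀ i, f (Sum.inl i) = f (Sum.inr (Sum.inl i)) := fun i => hvv i (hw _)
  have hv₀ : ∀ i, f (Sum.inl i) = false := by
    intro i
    have := hagree i
    unfold offVar at this
    split_ifs at this
    exacts [(hv i).trans this, this]
  funext d
  rcases d with i | i | j | i
  · exact hv₀ i
  · exact (hv i) ▸ hv₀ i
  · exact congrFun hy j
  · exact hw i

end Reduction

/-- Correctness of the reduction in Theorem 2.4: `(Φ, t')` has a defining
set of size at most `n` iff `∃x ∃!_t y μ(x, y)`. -/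
theorem stmt_6 (n m : ℕ) (hm : 2 ≤ m) (μ : List (Clause3 (Fin n ⊕ Fin m)))
    (t : Fin m → Bool)
    (ht : ∀ c ∈ μ, ∃ (j : Fin m) (s : Bool), t j = s ∧
      (c.1 = (Sum.inr j, s) ∨ c.2.1 = (Sum.inr j, s) ∨ c.2.2 = (Sum.inr j, s))) :
    (∃ D : Finset (V4 n m), D.card ≤ n ∧
        IsDefiningSet {q | Phi hm μ t q} (tPrime t) D) ↔
    (∃ x : Fin n → Bool, ∀ y : Fin m → Bool,
        (∀ c ∈ μ, clauseEval (Sum.elim x y) c = true) → y = t) := by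
  constructor
  · rintro ⟨D, hcard, hD⟩
    have hD' := eq_offSet_of_card_le hcard (mem_or_mem_of_isDefiningSet hm ht hD)
    exact ⟨_, eq_t_of_isDefiningSet_offSet hm (hD' ▸ hD)⟩
  · rintro ⟨x, hx⟩
    exact ⟨offSet x, card_offSet_le x, isDefiningSet_offSet hm ht hx⟩
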